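/- arXiv:1009.6229 — 3 statements merged into one kernel-verified Lean document; each statement's English description precedes it below -/
import Mathlib

section
/- Let μ be a grade-2 additive set function on 𝒜 with μ(∅)=0 and interference term I. Then for mutually disjoint A₁,…,Aₙ ∈ 𝒜 with n ≥ 1, μ(⋃_{i=1}^n Aᵢ) − μ(⋃_{i=2}^n Aᵢ) = μ(A₁) + Σ_{i=2}^n I(A₁,Aᵢ). -/
/-!
Peel the sets `A i` (`i > 0`) off one at a time: grade-2 additivity applied to `A 0`, the next
set `A i` and the union `C` of the remaining ones splits `μ (A 0 ∪ A i ∪ C)` into the two-set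
values, so that each step contributes exactly the interference `I(A 0, A i)`.
-/

section

variable {Ω : Type*} [MeasurableSpace Ω]

def GradeTwoAdditive (μ : Set Ω → ℝ) : Prop :=
  ∀ A B C : Set Ω, MeasurableSet A → MeasurableSet B → MeasurableSet C →
    Disjoint A B → Disjoint A C → Disjoint B C →
    μ (A ∪ B ∪ C) = μ (A ∪ B) + μ (A ∪ C) + μ (B ∪ C) - μ A - μ B - μ C

def interference (μ : Set Ω → ℝ) (A B : Set Ω) : ℝ := μ (A ∪ B) - μ A - μ B

theorem GradeTwoAdditive.union_biUnion {μ : Set Ω → ℝ} (hμ : GradeTwoAdditive μ)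
    (hempty : μ ∅ = 0) {ι : Type*} {A : ι → Set Ω} {B : Set Ω} (hB : MeasurableSet B)
    (s : Finset ι) (hA : ∀ i ∈ s, MeasurableSet (A i)) (hBA : ∀ i ∈ s, Disjoint B (A i))
    (hdisj : (s : Set ι).PairwiseDisjoint A) :
    μ (B ∪ ⋃ i ∈ s, A i) = μ B + μ (⋃ i ∈ s, A i) + ∑ i ∈ s, interference μ B (A i) := by
  classical
  induction s using Finset.induction_on with
  | empty => simp [hempty]
  | @insert a s ha ih =>
    simp only [Finset.mem_insert, forall_eq_or_imp] at hA hBA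
    rw [Finset.coe_insert, Set.pairwiseDisjoint_insert_of_notMem (by simpa using ha)] at hdisj
    have hC : MeasurableSet (⋃ i ∈ s, A i) := Finset.measurableSet_biUnion s hA.2
    have hBC : Disjoint B (⋃ i ∈ s, A i) := Set.disjoint_iUnion₂_right.2 hBA.2
    have haC : Disjoint (A a) (⋃ i ∈ s, A i) := Set.disjoint_iUnion₂_right.2 hdisj.2
    rw [Finset.set_biUnion_insert, ← Set.union_assoc, hμ B (A a) _ hB hA.1 hC hBA.1 hBC haC,
      ih hA.2 hBA.2 hdisj.1, Finset.sum_insert ha, interference]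
    ring

end

theorem stmt_1_general {Ω : Type*} [MeasurableSpace Ω] (μ : Set Ω → ℝ)
    (hempty : μ ∅ = 0)
    (hgrade2 : ∀ A B C : Set Ω, MeasurableSet A → MeasurableSet B → MeasurableSet C →
      Disjoint A B → Disjoint A C → Disjoint B C →
      μ (A ∪ B ∪ C) = μ (A ∪ B) + μ (A ∪ C) + μ (B ∪ C) - μ A - μ B - μ C)
    (n : ℕ) (A : Fin (n + 1) → Set Ω) (hA : ∀ i, MeasurableSet (A i))
    (hdisj : ∀ i j, i ≠ j → Disjoint (A i) (A j)) :
    μ (⋃ i, A i) - μ (⋃ i ∈ Finset.Ioi (0 : Fin (n + 1)), A i) =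
      μ (A 0) + ∑ i ∈ Finset.Ioi (0 : Fin (n + 1)),
        (μ (A 0 ∪ A i) - μ (A 0) - μ (A i)) := by
  have hsplit : (⋃ i, A i) = A 0 ∪ ⋃ i ∈ Finset.Ioi (0 : Fin (n + 1)), A i := by
    rw [← Finset.set_biUnion_insert, Finset.Ioi_insert, ← bot_eq_zero, Finset.Ici_bot]
    simp only [Finset.mem_univ, Set.iUnion_true]
  have hA0 (i) (hi : i ∈ Finset.Ioi (0 : Fin (n + 1))) : Disjoint (A 0) (A i) :=
    hdisj 0 i (Finset.mem_Ioi.1 hi).ne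
  rw [hsplit, GradeTwoAdditive.union_biUnion hgrade2 hempty (hA 0) _ (fun i _ ↦ hA i) hA0
    (fun i _ j _ ↦ hdisj i j)]
  simp only [interference]
  ring

/-- For mutually disjoint `A₁,…,Aₙ` (n ≥ 1),
`μ(⋃_{i=1}^n Aᵢ) − μ(⋃_{i=2}^n Aᵢ) = μ(A₁) + Σ_{i=2}^n I(A₁,Aᵢ)`. -/
theorem stmt_1 {Ω : Type*} [MeasurableSpace Ω] (μ : Set Ω → ℝ)
    (hnonneg : ∀ A, MeasurableSet A → 0 ≤ μ A)
    (hempty : μ ∅ = 0)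
    (hgrade2 : ∀ A B C : Set Ω, MeasurableSet A → MeasurableSet B → MeasurableSet C →
      Disjoint A B → Disjoint A C → Disjoint B C →
      μ (A ∪ B ∪ C) = μ (A ∪ B) + μ (A ∪ C) + μ (B ∪ C) - μ A - μ B - μ C)
    (n : ℕ) (A : Fin (n + 1) → Set Ω) (hA : ∀ i, MeasurableSet (A i))
    (hdisj : ∀ i j, i ≠ j → Disjoint (A i) (A j)) :
    μ (⋃ i, A i) - μ (⋃ i ∈ Finset.Ioi (0 : Fin (n + 1)), A i) =
      μ (A 0) + ∑ i ∈ Finset.Ioi (0 : Fin (n + 1)),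
        (μ (A 0 ∪ A i) - μ (A 0) - μ (A i)) :=
  stmt_1_general μ hempty hgrade2 n A hA hdisj
end

section
/- Let μ be a grade-2 additive set function on 𝒜 with μ(∅)=0. Then for mutually disjoint A₁,…,Aₙ (n ≥ 2), μ(⋃ᵢ Aᵢ) = Σ_{i<j} μ(Aᵢ ∪ Aⱼ) − (n−2) Σᵢ μ(Aᵢ). -/
/-!
Grade-2 additivity applied to `B`, `A₀` and `⋃_{i>0} Aᵢ` gives, by induction on the number of
sets, `μ(B ∪ ⋃ᵢ Aᵢ)` in terms of `μ(⋃ᵢ Aᵢ)`, the `μ(B ∪ Aᵢ)`, the `μ(Aᵢ)` and `μ(B)`. Taking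
`B = A₀` and the family `A₁, …, Aₙ₋₁` turns this into the inductive step of the formula for
`μ(⋃ᵢ Aᵢ)`.
-/

open Finset Function

def IsGradeTwoAdditive {Ω : Type*} [MeasurableSpace Ω] (μ : Set Ω → ℝ) : Prop :=
  ∀ A B C : Set Ω, MeasurableSet A → MeasurableSet B → MeasurableSet C →
    Disjoint A B → Disjoint A C → Disjoint B C →
    μ (A ∪ B ∪ C) = μ (A ∪ B) + μ (A ∪ C) + μ (B ∪ C) - μ A - μ B - μ C

namespace IsGradeTwoAdditive

variable {Ω : Type*} [MeasurableSpace Ω] {μ : Set Ω → ℝ}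

theorem apply_union_iUnion (hμ : IsGradeTwoAdditive μ) (hempty : μ ∅ = 0) {n : ℕ}
    {B : Set Ω} (hB : MeasurableSet B) {A : Fin n → Set Ω} (hA : ∀ i, MeasurableSet (A i))
    (hdisj : Pairwise (Disjoint on A)) (hBA : ∀ i, Disjoint B (A i)) :
    μ (B ∪ ⋃ i, A i) = ∑ i, μ (B ∪ A i) + μ (⋃ i, A i) - ∑ i, μ (A i) - ((n : ℝ) - 1) * μ B := by
  induction n with
  | zero => simp [hempty]
  | succ n ih =>
    have hsplit : ⋃ i, A i = A 0 ∪ ⋃ i : Fin n, A i.succ := by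
      rw [Set.iUnion_fin_add_one_eq_iUnion_succ, comp_def]
    have hU : MeasurableSet (⋃ i : Fin n, A i.succ) := .iUnion fun i ↦ hA _
    have hAU : Disjoint (A 0) (⋃ i : Fin n, A i.succ) :=
      Set.disjoint_iUnion_right.2 fun i ↦ hdisj (Fin.succ_ne_zero i).symm
    have hBU : Disjoint B (⋃ i : Fin n, A i.succ) := Set.disjoint_iUnion_right.2 fun i ↦ hBA _
    rw [hsplit, ← Set.union_assoc, hμ B (A 0) _ hB (hA 0) hU (hBA 0) hBU hAU,
      ih (fun i ↦ hA i.succ) (hdisj.comp_of_injective (Fin.succ_injective n))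
        (fun i ↦ hBA i.succ),
      Fin.sum_univ_succ, Fin.sum_univ_succ]
    push_cast
    ring

theorem apply_iUnion (hμ : IsGradeTwoAdditive μ) (hempty : μ ∅ = 0) {n : ℕ}
    {A : Fin n → Set Ω} (hA : ∀ i, MeasurableSet (A i)) (hdisj : Pairwise (Disjoint on A)) :
    μ (⋃ i, A i) = ∑ i, ∑ j ∈ Ioi i, μ (A i ∪ A j) - ((n : ℝ) - 2) * ∑ i, μ (A i) := by
  induction n with
  | zero => simp [hempty]
  | succ n ih =>
    have hdisj' : Pairwise (Disjoint on fun i ↦ A (Fin.succ i)) :=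
      hdisj.comp_of_injective (Fin.succ_injective n)
    rw [Set.iUnion_fin_add_one_eq_iUnion_succ, comp_def,
      hμ.apply_union_iUnion hempty (hA 0) (fun i ↦ hA i.succ) hdisj'
        fun i ↦ hdisj (Fin.succ_ne_zero i).symm,
      ih (fun i ↦ hA i.succ) hdisj', Fin.sum_univ_succ, Fin.sum_univ_succ, Fin.sum_Ioi_zero]
    simp only [Fin.sum_Ioi_succ]
    push_cast
    ring

end IsGradeTwoAdditive

theorem stmt_2_general {Ω : Type*} [MeasurableSpace Ω] (μ : Set Ω → ℝ)
    (hempty : μ ∅ = 0)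
    (hgrade2 : ∀ A B C : Set Ω, MeasurableSet A → MeasurableSet B → MeasurableSet C →
      Disjoint A B → Disjoint A C → Disjoint B C →
      μ (A ∪ B ∪ C) = μ (A ∪ B) + μ (A ∪ C) + μ (B ∪ C) - μ A - μ B - μ C)
    (n : ℕ) (A : Fin n → Set Ω) (hA : ∀ i, MeasurableSet (A i))
    (hdisj : ∀ i j, i ≠ j → Disjoint (A i) (A j)) :
    μ (⋃ i, A i) = ∑ i, ∑ j ∈ Finset.Ioi i, μ (A i ∪ A j)
      - ((n : ℝ) - 2) * ∑ i, μ (A i) :=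
  IsGradeTwoAdditive.apply_iUnion hgrade2 hempty hA hdisj

/-- For mutually disjoint `A₁,…,Aₙ` (n ≥ 2),
`μ(⋃ᵢ Aᵢ) = Σ_{i<j} μ(Aᵢ ∪ Aⱼ) − (n−2) Σᵢ μ(Aᵢ)`. -/
theorem stmt_2 {Ω : Type*} [MeasurableSpace Ω] (μ : Set Ω → ℝ)
    (hnonneg : ∀ A, MeasurableSet A → 0 ≤ μ A)
    (hempty : μ ∅ = 0)
    (hgrade2 : ∀ A B C : Set Ω, MeasurableSet A → MeasurableSet B → MeasurableSet C →
      Disjoint A B → Disjoint A C → Disjoint B C →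
      μ (A ∪ B ∪ C) = μ (A ∪ B) + μ (A ∪ C) + μ (B ∪ C) - μ A - μ B - μ C)
    (n : ℕ) (hn : 2 ≤ n) (A : Fin n → Set Ω) (hA : ∀ i, MeasurableSet (A i))
    (hdisj : ∀ i j, i ≠ j → Disjoint (A i) (A j)) :
    μ (⋃ i, A i) = ∑ i, ∑ j ∈ Finset.Ioi i, μ (A i ∪ A j)
      - ((n : ℝ) - 2) * ∑ i, μ (A i) :=
  stmt_2_general μ hempty hgrade2 n A hA hdisj
end

section
/- Let D be a decoherence functional on an algebra 𝒜 with μ(A) = D(A,A). Then for disjoint A, B: (√μ(A) − √μ(B))² ≤ μ(A ∪ B) ≤ (√μ(A) + √μ(B))². -/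
/-! The parallelogram-type expansion `μ(A ∪ B) = μ(A) + μ(B) + 2 Re D(A,B)` for disjoint `A, B`,
together with the Cauchy–Schwarz bound `|Re D(A,B)| ≤ √μ(A) √μ(B)`, squeezes `μ(A ∪ B)` between
`(√μ(A) ∓ √μ(B))²`. -/

theorem sub_sq_le_and_le_add_sq {a b c : ℝ} (h : |c| ≤ a * b) :
    (a - b) ^ 2 ≤ a ^ 2 + b ^ 2 + 2 * c ∧ a ^ 2 + b ^ 2 + 2 * c ≤ (a + b) ^ 2 := by
  obtain ⟨hlo, hhi⟩ := abs_le.mp h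
  constructor <;> nlinarith

section DecoherenceFunctional

variable {Ω : Type*} {D : Set Ω → Set Ω → ℂ}

theorem apply_union_right (hherm : ∀ A B, D A B = starRingEnd ℂ (D B A))
    (hadd : ∀ A B C : Set Ω, Disjoint A B → D (A ∪ B) C = D A C + D B C)
    {A B : Set Ω} (hAB : Disjoint A B) (C : Set Ω) :
    D C (A ∪ B) = D C A + D C B := by
  rw [hherm, hadd A B C hAB, map_add, ← hherm, ← hherm]

theorem re_apply_union_self (hherm : ∀ A B, D A B = starRingEnd ℂ (D B A))
    (hadd : ∀ A B C : Set Ω, Disjoint A B → D (A ∪ B) C = D A C + D B C)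
    {A B : Set Ω} (hAB : Disjoint A B) :
    (D (A ∪ B) (A ∪ B)).re = (D A A).re + (D B B).re + 2 * (D A B).re := by
  have hsymm : (D B A).re = (D A B).re := by rw [hherm B A, Complex.conj_re]
  rw [hadd A B _ hAB, apply_union_right hherm hadd hAB, apply_union_right hherm hadd hAB]
  simp only [Complex.add_re, hsymm]
  ring

theorem abs_re_le_sqrt_mul_sqrt (hpos : ∀ A : Set Ω, 0 ≤ (D A A).re)
    (hcs : ∀ A B : Set Ω, ‖D A B‖ ^ 2 ≤ (D A A).re * (D B B).re) (A B : Set Ω) :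
    |(D A B).re| ≤ √(D A A).re * √(D B B).re :=
  calc |(D A B).re| ≤ ‖D A B‖ := Complex.abs_re_le_norm _
    _ = √(‖D A B‖ ^ 2) := (Real.sqrt_sq (norm_nonneg _)).symm
    _ ≤ √((D A A).re * (D B B).re) := Real.sqrt_le_sqrt (hcs A B)
    _ = √(D A A).re * √(D B B).re := Real.sqrt_mul (hpos A) _

end DecoherenceFunctional

/-- For a decoherence functional `D` with `μ(A) = D(A,A)` and disjoint `A,B`:
`(√μ(A) − √μ(B))² ≤ μ(A ∪ B) ≤ (√μ(A) + √μ(B))²`. -/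
theorem stmt_5 {Ω : Type*} (D : Set Ω → Set Ω → ℂ)
    (hherm : ∀ A B, D A B = starRingEnd ℂ (D B A))
    (hadd : ∀ A B C : Set Ω, Disjoint A B → D (A ∪ B) C = D A C + D B C)
    (hpos : ∀ A : Set Ω, 0 ≤ (D A A).re ∧ (D A A).im = 0)
    (hcs : ∀ A B : Set Ω, ‖D A B‖ ^ 2 ≤ (D A A).re * (D B B).re)
    (A B : Set Ω) (hAB : Disjoint A B) :
    (Real.sqrt ((D A A).re) - Real.sqrt ((D B B).re)) ^ 2 ≤ (D (A ∪ B) (A ∪ B)).re ∧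
      (D (A ∪ B) (A ∪ B)).re ≤ (Real.sqrt ((D A A).re) + Real.sqrt ((D B B).re)) ^ 2 := by
  have hnonneg : ∀ A : Set Ω, 0 ≤ (D A A).re := fun A => (hpos A).1
  have bounds := sub_sq_le_and_le_add_sq (abs_re_le_sqrt_mul_sqrt hnonneg hcs A B)
  rwa [Real.sq_sqrt (hnonneg A), Real.sq_sqrt (hnonneg B),
    ← re_apply_union_self hherm hadd hAB] at bounds
end
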